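/- arXiv:2112.13613 — 4 statements merged into one kernel-verified Lean document; each statement's English description precedes it below -/
import Mathlib

section
/- Define Ψ(x,y) = [(1+2y+xy)² − y(1+y)] / [(1+y)(1+y+xy)] − κ y⁴ (1+x)² / [(1+y)² (1+y+xy)] for (x,y) ∈ [0, 1.405] × [0, 1.405] and κ ∈ [0.25, 1.4]. Then 1 ≤ Ψ(x,y) ≤ 2.7. -/
set_option maxHeartbeats 1600000 in
theorem stmt_7 (x y κ : ℝ) (hx : x ∈ Set.Icc (0:ℝ) 1.405)
    (hy : y ∈ Set.Icc (0:ℝ) 1.405) (hκ : κ ∈ Set.Icc (0.25:ℝ) 1.4) :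
    1 ≤ ((1 + 2*y + x*y)^2 - y*(1 + y)) / ((1 + y) * (1 + y + x*y))
        - κ * y^4 * (1 + x)^2 / ((1 + y)^2 * (1 + y + x*y)) ∧
    ((1 + 2*y + x*y)^2 - y*(1 + y)) / ((1 + y) * (1 + y + x*y))
        - κ * y^4 * (1 + x)^2 / ((1 + y)^2 * (1 + y + x*y)) ≤ 2.7 := by
  obtain ⟨hx0, hx1⟩ := hx
  obtain ⟨hy0, hy1⟩ := hy
  obtain ⟨hk0, hk1⟩ := hκ
  have h1 : (0:ℝ) < 1 + y := by linarith
  have h2 : (0:ℝ) < 1 + y + x*y := by nlinarith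
  have hD2 : (0:ℝ) < (1 + y)^2 * (1 + y + x*y) := by positivity
  have hD1 : (0:ℝ) < (1 + y) * (1 + y + x*y) := by positivity
  constructor
  · rw [← sub_nonneg]
    have heq : ((1 + 2*y + x*y)^2 - y*(1 + y)) / ((1 + y) * (1 + y + x*y))
        - κ * y^4 * (1 + x)^2 / ((1 + y)^2 * (1 + y + x*y)) - 1
        = (((1 + 2*y + x*y)^2 - y*(1 + y)) * (1 + y) - κ * y^4 * (1 + x)^2
          - (1 + y)^2 * (1 + y + x*y)) / ((1 + y)^2 * (1 + y + x*y)) := by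
      field_simp
    rw [heq]
    apply div_nonneg _ (le_of_lt hD2)
    have hR : 0 ≤ (1+y)*(1+2*y+x+3*x*y+x^2*y) - κ*y^3*(1+x)^2 := by
      nlinarith [mul_nonneg (sub_nonneg.2 hk1) (mul_nonneg (mul_nonneg (mul_nonneg hy0 hy0) hy0) (sq_nonneg (1+x))),
        mul_nonneg (mul_nonneg hy0 hy0) (sub_nonneg.2 hy1),
        mul_nonneg (mul_nonneg (mul_nonneg hx0 hy0) hy0) (sub_nonneg.2 hy1),
        mul_nonneg (mul_nonneg (mul_nonneg (mul_nonneg hx0 hx0) hy0) hy0) (sub_nonneg.2 hy1),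
        mul_nonneg (mul_nonneg hx0 hy0) (sub_nonneg.2 hy1),
        mul_nonneg hy0 (mul_nonneg (sub_nonneg.2 hx1) (by linarith : (0:ℝ) ≤ 1.405 + x)),
        mul_nonneg hx0 hy0]
    nlinarith [mul_nonneg hy0 hR]
  · rw [← sub_nonneg]
    have heq : (2.7:ℝ) - (((1 + 2*y + x*y)^2 - y*(1 + y)) / ((1 + y) * (1 + y + x*y))
        - κ * y^4 * (1 + x)^2 / ((1 + y)^2 * (1 + y + x*y)))
        = ((2.7:ℝ) * ((1 + y)^2 * (1 + y + x*y)) - ((1 + 2*y + x*y)^2 - y*(1 + y)) * (1 + y)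
          + κ * y^4 * (1 + x)^2) / ((1 + y)^2 * (1 + y + x*y)) := by
      field_simp
      ring
    rw [heq]
    apply div_nonneg _ (le_of_lt hD2)
    nlinarith [mul_nonneg (sub_nonneg.2 hk0) (mul_nonneg (mul_nonneg (mul_nonneg hy0 hy0) (mul_nonneg hy0 hy0)) (sq_nonneg (1+x))),
      mul_nonneg (mul_nonneg hx0 hy0) (sub_nonneg.2 hy1),
      mul_nonneg (mul_nonneg (mul_nonneg hx0 hy0) hy0) (sub_nonneg.2 hy1),
      mul_nonneg (mul_nonneg (mul_nonneg (mul_nonneg hx0 hy0) hy0) hy0) (sub_nonneg.2 hy1),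
      mul_nonneg (mul_nonneg (mul_nonneg (mul_nonneg hx0 hx0) hy0) hy0) (sub_nonneg.2 hy1),
      mul_nonneg (mul_nonneg hy0 hy0) (mul_nonneg (sub_nonneg.2 hx1) (by linarith : (0:ℝ) ≤ 1.405 + x)),
      mul_nonneg hy0 (sub_nonneg.2 hy1),
      mul_nonneg (mul_nonneg hy0 hy0) (sub_nonneg.2 hy1),
      mul_nonneg hx0 hy0]
end

section
/- Define ψ(x,y) = −x²[(1+2y+xy)² − y(1+y)] / [(1+x)(1+y)(1+y+xy)] + 1.4 x² y⁴ (1+x) / [(1+y)² (1+y+xy)] for (x,y) ∈ [0, 1.405] × [0, 1.405]. Then ψ(x,y) ≤ 0. -/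
theorem stmt_8 (x y : ℝ) (hx : x ∈ Set.Icc (0:ℝ) 1.405)
    (hy : y ∈ Set.Icc (0:ℝ) 1.405) :
    -(x^2 * ((1 + 2*y + x*y)^2 - y*(1 + y))) / ((1 + x) * (1 + y) * (1 + y + x*y))
      + 1.4 * x^2 * y^4 * (1 + x) / ((1 + y)^2 * (1 + y + x*y)) ≤ 0 := by
  obtain ⟨hx0, hx1⟩ := hx
  obtain ⟨hy0, hy1⟩ := hy
  have hxp : (0:ℝ) < 1 + x := by linarith
  have hyp : (0:ℝ) < 1 + y := by linarith
  have hzp : (0:ℝ) < 1 + y + x*y := by nlinarith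
  have key : x^2 * (1.4*y^4*(1+x)^2 - ((1 + 2*y + x*y)^2 - y*(1 + y))*(1+y)) ≤ 0 := by
    have h : 1.4*y^4*(1+x)^2 ≤ ((1 + 2*y + x*y)^2 - y*(1 + y))*(1+y) := by
      nlinarith [sq_nonneg x, sq_nonneg y, sq_nonneg (x*y), mul_nonneg hx0 hy0,
        mul_nonneg (mul_nonneg hx0 hy0) hy0, sq_nonneg (x-y), sq_nonneg (1.405 - y),
        mul_nonneg (sub_nonneg.2 hx1) (sub_nonneg.2 hy1),
        mul_nonneg (mul_nonneg hy0 hy0) (sub_nonneg.2 hy1),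
        mul_nonneg (mul_nonneg (mul_nonneg hy0 hy0) hy0) (sub_nonneg.2 hy1),
        mul_nonneg (mul_nonneg (mul_nonneg hy0 hy0) hy0) (sub_nonneg.2 hx1),
        mul_nonneg (mul_nonneg (mul_nonneg (mul_nonneg hy0 hy0) hy0) hy0) (sub_nonneg.2 hx1),
        mul_nonneg (mul_nonneg hx0 hy0) (sub_nonneg.2 hy1)]
    nlinarith [sq_nonneg x]
  have heq : -(x^2 * ((1 + 2*y + x*y)^2 - y*(1 + y))) / ((1 + x) * (1 + y) * (1 + y + x*y))
      + 1.4 * x^2 * y^4 * (1 + x) / ((1 + y)^2 * (1 + y + x*y))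
      = x^2 * (1.4*y^4*(1+x)^2 - ((1 + 2*y + x*y)^2 - y*(1 + y))*(1+y))
        / ((1 + x) * (1 + y)^2 * (1 + y + x*y)) := by
    field_simp
    ring
  rw [heq]
  apply div_nonpos_of_nonpos_of_nonneg key
  positivity
end

section
/- Fix r ∈ (1, 1.731] and set, for n ≥ 3 with r_n = r_{n−1} = r: a₀ = (1+r)[1+2r+r(1+4r+3r²)]/[(1+r)²(1+r+r²)], a₁ = −r^{3/2}[(1+2r+r²)² − r(1+r)]/[(1+r)²(1+r+r²)], a₂ = r^{3/2}·r^{5/2}(1+r)²/[(1+r)²(1+r+r²)]. Then a₂ > 0 and a₀ − a₂ − a₁²/(8a₂) > 0; consequently the generating function g(x) = 2a₂x² + a₁x + (a₀ − a₂) is strictly positive for all x ∈ [−1, 1]. -/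
theorem stmt_16 (r : ℝ) (hr : r ∈ Set.Ioc (1:ℝ) 1.731) :
    let a0 := (1 + r) * (1 + 2*r + r*(1 + 4*r + 3*r^2)) / ((1 + r)^2 * (1 + r + r^2))
    let a1 := -(r ^ ((3:ℝ)/2)) * ((1 + 2*r + r^2)^2 - r*(1 + r)) / ((1 + r)^2 * (1 + r + r^2))
    let a2 := r ^ ((3:ℝ)/2) * r ^ ((5:ℝ)/2) * (1 + r)^2 / ((1 + r)^2 * (1 + r + r^2))
    0 < a2 ∧ 0 < a0 - a2 - a1^2 / (8 * a2) ∧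
      ∀ x ∈ Set.Icc (-1:ℝ) 1, 0 < 2*a2*x^2 + a1*x + (a0 - a2) := by
  intro a0 a1 a2
  obtain ⟨h1, h2⟩ := hr
  have hrpos : (0:ℝ) < r := lt_trans one_pos h1
  have hprod : r ^ ((3:ℝ)/2) * r ^ ((5:ℝ)/2) = r^4 := by
    rw [← Real.rpow_natCast r 4, ← Real.rpow_add hrpos]; norm_num
  have hsq : (r ^ ((3:ℝ)/2))^2 = r^3 := by
    rw [← Real.rpow_natCast (r ^ ((3:ℝ)/2)) 2, ← Real.rpow_natCast r 3,
      ← Real.rpow_mul hrpos.le]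
    norm_num
  have hD : (0:ℝ) < (1 + r)^2 * (1 + r + r^2) := by positivity
  have ha2eq : a2 = r^4 * (1 + r)^2 / ((1 + r)^2 * (1 + r + r^2)) := by
    simp only [a2]; rw [hprod]
  have ha2 : 0 < a2 := by rw [ha2eq]; positivity
  have ha1sq : a1^2 = r^3 * ((1 + 2*r + r^2)^2 - r*(1 + r))^2
      / ((1 + r)^2 * (1 + r + r^2))^2 := by
    simp only [a1]
    rw [div_pow, mul_pow, neg_sq, hsq]
  have key : 0 < -8*r^7 - 17*r^6 + 10*r^5 + 43*r^4 + 42*r^3 + 22*r^2 + 4*r - 1 := by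
    nlinarith [mul_pos (sub_pos.2 h1) (sub_pos.2 h1), sq_nonneg (r-1), sq_nonneg (r+1),
      mul_nonneg (mul_nonneg (sub_nonneg.2 h2) (sub_pos.2 h1).le) (sq_nonneg (r-1)),
      mul_nonneg (sub_nonneg.2 h2) (sq_nonneg (r-1)),
      mul_nonneg (sub_nonneg.2 h2) (sq_nonneg (r^2-1)),
      mul_nonneg (mul_nonneg (sub_nonneg.2 h2) (sub_nonneg.2 h2)) (sq_nonneg (r-1)),
      mul_nonneg (mul_nonneg (sub_nonneg.2 h2) (sub_nonneg.2 h2)) (sq_nonneg (r^2-1))]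
  have hmain : 0 < a0 - a2 - a1^2 / (8 * a2) := by
    have e : a0 - a2 - a1^2 / (8 * a2)
        = (-8*r^7 - 17*r^6 + 10*r^5 + 43*r^4 + 42*r^3 + 22*r^2 + 4*r - 1)
          / (8 * r * ((1 + r)^2 * (1 + r + r^2))) := by
      rw [ha1sq, ha2eq]
      simp only [a0]
      have h1r : (1 + r) ≠ 0 := by positivity
      have h2r : (1 + r + r^2) ≠ 0 := by positivity
      field_simp
      ring
    rw [e]
    exact div_pos key (by positivity)
  refine ⟨ha2, hmain, ?_⟩
  intro x _
  have h2' : a1^2 < 8 * a2 * (a0 - a2) := by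
    have := (div_lt_iff₀ (by positivity : (0:ℝ) < 8 * a2)).1 (by linarith : a1^2 / (8*a2) < a0 - a2)
    linarith
  nlinarith [sq_nonneg (4*a2*x + a1), ha2, h2', mul_pos ha2 ha2]
end

section
/- The polynomial l(y) = −8y⁷ − 17y⁶ + 10y⁵ + 43y⁴ + 42y³ + 22y² + 4y − 1 is strictly positive for all y ∈ [1, 1.731]. -/
theorem stmt_17 (y : ℝ) (hy : y ∈ Set.Icc (1:ℝ) 1.731) :
    -8*y^7 - 17*y^6 + 10*y^5 + 43*y^4 + 42*y^3 + 22*y^2 + 4*y - 1 > 0 := by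
  obtain ⟨h1, h2⟩ := hy
  have hy0 : (0:ℝ) ≤ y := by linarith
  nlinarith [mul_nonneg (sub_nonneg.2 h1) (sub_nonneg.2 h2),
    mul_nonneg (mul_nonneg (sub_nonneg.2 h1) (sub_nonneg.2 h2)) (sq_nonneg y),
    mul_nonneg (mul_nonneg (sub_nonneg.2 h1) (sub_nonneg.2 h2)) (mul_nonneg (sq_nonneg y) hy0),
    mul_nonneg (mul_nonneg (sub_nonneg.2 h1) (sub_nonneg.2 h2)) (mul_nonneg (sq_nonneg y) (sq_nonneg y)),
    mul_nonneg (mul_nonneg (sub_nonneg.2 h1) (sub_nonneg.2 h2)) (mul_nonneg (mul_nonneg (sq_nonneg y) (sq_nonneg y)) hy0),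
    mul_nonneg (mul_nonneg (sub_nonneg.2 h1) (sub_nonneg.2 h2)) hy0,
    sq_nonneg (y-1), sq_nonneg (1.731-y)]
end
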